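/- arXiv:2411.00296 — 3 statements merged into one kernel-verified Lean document; each statement's English description precedes it below -/
import Mathlib

section
/- Raabe's formula: for every real number x ≥ 0, ∫_x^{x+1} ln Γ(t) dt = x ln x − x + (1/2) ln(2π), where for x = 0 the term x ln x is interpreted as 0. -/
/-!
`G x = ∫ t in x..x + 1, log (Gamma t)` has derivative `log Γ(x + 1) - log Γ(x) = log x`, so
`G x = x log x - x + C` for `x > 0`. Integrating the logarithm of Legendre's duplication formula
over `[x, x + 1/2]` gives `G x = G (2x) / 2 + (1/4 - x) log 2 + log π / 4` for all `x ≥ 0`: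
at `x = 1` this forces `C = log (2π) / 2`, and at `x = 0` it evaluates `G 0` directly.
-/

open Real intervalIntegral MeasureTheory Set

lemma continuousOn_log_Gamma : ContinuousOn (fun t => log (Gamma t)) (Ioi 0) :=
  convexOn_log_Gamma.continuousOn isOpen_Ioi

lemma log_Gamma_add_one {t : ℝ} (ht : 0 < t) : log (Gamma (t + 1)) = log t + log (Gamma t) := by
  rw [Gamma_add_one ht.ne', log_mul ht.ne' (Gamma_pos_of_pos ht).ne']

lemma intervalIntegrable_log_Gamma {a b : ℝ} (ha : 0 ≤ a) (hb : 0 ≤ b) :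
    IntervalIntegrable (fun t => log (Gamma t)) volume a b := by
  have from_zero {c : ℝ} (hc : 0 ≤ c) : IntervalIntegrable (fun t => log (Gamma t)) volume 0 c := by
    have hshift : ContinuousOn (fun t => log (Gamma (t + 1))) (uIcc 0 c) :=
      continuousOn_log_Gamma.comp (continuousOn_id.add continuousOn_const) fun t ht => by
        rw [uIcc_of_le hc] at ht
        exact mem_Ioi.mpr (by linarith [ht.1])
    refine (hshift.intervalIntegrable.sub intervalIntegrable_log').congr fun t ht => ?_
    rw [uIoc_of_le hc] at ht
    simp only [log_Gamma_add_one ht.1, add_sub_cancel_left]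
  exact (from_zero ha).symm.trans (from_zero hb)

lemma hasDerivAt_integral_add_one {f : ℝ → ℝ} {a x : ℝ} (hf : ContinuousOn f (Ioi a))
    (hx : a < x) : HasDerivAt (fun y => ∫ t in y..y + 1, f t) (f (x + 1) - f x) x := by
  have hint {u v : ℝ} (hu : a < u) (hv : a < v) : IntervalIntegrable f volume u v :=
    (hf.mono fun t ht => lt_of_lt_of_le (lt_min hu hv) ht.1).intervalIntegrable
  have hderiv {y : ℝ} (hy : a < y) : HasDerivAt (fun u => ∫ t in x..u, f t) (f y) y :=
    integral_hasDerivAt_right (hint hx hy) (hf.stronglyMeasurableAtFilter isOpen_Ioi y hy)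
      (hf.continuousAt (isOpen_Ioi.mem_nhds hy))
  refine (((hderiv (by linarith : a < x + 1)).comp_add_const x 1).sub (hderiv hx))
    |>.congr_of_eventuallyEq ?_
  filter_upwards [isOpen_Ioi.mem_nhds hx] with y hy
  exact (integral_interval_sub_left (hint hx (by linarith [mem_Ioi.mp hy])) (hint hx hy)).symm

lemma hasDerivAt_integral_log_Gamma {x : ℝ} (hx : 0 < x) :
    HasDerivAt (fun y => ∫ t in y..y + 1, log (Gamma t)) (log x) x := by
  simpa only [log_Gamma_add_one hx, add_sub_cancel_right] using
    hasDerivAt_integral_add_one continuousOn_log_Gamma hx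

lemma exists_integral_log_Gamma_eq_add_const :
    ∃ C, ∀ x > 0, ∫ t in x..x + 1, log (Gamma t) = x * log x - x + C := by
  have hG {x : ℝ} (hx : x ∈ Ioi 0) := hasDerivAt_integral_log_Gamma hx
  have hxlogx {x : ℝ} (hx : x ∈ Ioi 0) : HasDerivAt (fun y => y * log y - y) (log x) x := by
    have := (hasDerivAt_mul_log (ne_of_gt hx)).sub (hasDerivAt_id' x)
    rwa [add_sub_cancel_right] at this
  obtain ⟨C, hC⟩ := isOpen_Ioi.exists_eq_add_of_deriv_eq isPreconnected_Ioi
    (fun x hx => (hG hx).differentiableAt.differentiableWithinAt)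
    (fun x hx => (hxlogx hx).differentiableAt.differentiableWithinAt)
    (fun x hx => (hG hx).deriv.trans (hxlogx hx).deriv.symm)
  exact ⟨C, fun x hx => hC hx⟩

lemma log_Gamma_add_log_Gamma_add_half {t : ℝ} (ht : 0 < t) :
    log (Gamma t) + log (Gamma (t + 1 / 2)) =
      log (Gamma (2 * t)) + (1 - 2 * t) * log 2 + log π / 2 := by
  have hpos {s : ℝ} (hs : 0 < s) : Gamma s ≠ 0 := (Gamma_pos_of_pos hs).ne'
  have h := congrArg log (Gamma_mul_Gamma_add_half_of_pos ht)
  rwa [log_mul (hpos ht) (hpos (by positivity)),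
    log_mul (mul_ne_zero (hpos (by positivity)) (by positivity)) (by positivity),
    log_mul (hpos (by positivity)) (by positivity), log_rpow two_pos, log_sqrt pi_pos.le] at h

lemma integral_eq_integral_add_integral_comp_add_half {f : ℝ → ℝ} {x : ℝ}
    (h₁ : IntervalIntegrable f volume x (x + 1 / 2))
    (h₂ : IntervalIntegrable f volume (x + 1 / 2) (x + 1)) :
    ∫ t in x..x + 1, f t = ∫ t in x..x + 1 / 2, (f t + f (t + 1 / 2)) := by
  have h₂' : IntervalIntegrable (fun t => f (t + 1 / 2)) volume x (x + 1 / 2) := by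
    rwa [IntervalIntegrable.comp_add_right_iff, add_assoc, add_halves]
  rw [integral_add h₁ h₂', integral_comp_add_right, add_assoc x, add_halves,
    integral_add_adjacent_intervals h₁ h₂]

lemma integral_log_Gamma_eq_half_integral_two_mul {x : ℝ} (hx : 0 ≤ x) :
    ∫ t in x..x + 1, log (Gamma t) =
      (∫ t in 2 * x..2 * x + 1, log (Gamma t)) / 2 + (1 / 4 - x) * log 2 + log π / 4 := by
  set L := fun t => log (Gamma t)
  have hxh : 0 ≤ x + 1 / 2 := by linarith
  have hL_two_mul : IntervalIntegrable (fun t => L (2 * t)) volume x (x + 1 / 2) := by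
    have := (intervalIntegrable_log_Gamma (by linarith : 0 ≤ 2 * x) (by linarith :
      0 ≤ 2 * x + 1)).comp_mul_left (c := 2)
    convert this using 1 <;> ring
  have hdup : ∫ t in x..x + 1 / 2, (L t + L (t + 1 / 2)) =
      ∫ t in x..x + 1 / 2, (L (2 * t) + ((1 - 2 * t) * log 2 + log π / 2)) := by
    -- only on `Ι x (x + 1/2)`: the identity fails at `t = 0`, where `Gamma 0 = 0` is a junk value
    refine integral_congr_ae (ae_of_all _ fun t ht => ?_)
    rw [uIoc_of_le (by linarith)] at ht
    simp only [L, log_Gamma_add_log_Gamma_add_half (lt_of_le_of_lt hx ht.1), add_assoc]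
  have hscale : ∫ t in x..x + 1 / 2, L (2 * t) = (∫ t in 2 * x..2 * x + 1, L t) / 2 := by
    rw [integral_comp_mul_left _ two_ne_zero, smul_eq_mul, mul_add, mul_one_div_cancel two_ne_zero]
    ring
  have hlinear : ∫ t in x..x + 1 / 2, ((1 - 2 * t) * log 2 + log π / 2) =
      (1 / 4 - x) * log 2 + log π / 4 := by
    have hlin : IntervalIntegrable (fun t : ℝ => (1 - 2 * t) * log 2) volume x (x + 1 / 2) :=
      Continuous.intervalIntegrable (by fun_prop) _ _
    rw [integral_add hlin intervalIntegrable_const, intervalIntegral.integral_mul_const,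
      intervalIntegral.integral_sub intervalIntegrable_const
        ((continuous_const_mul 2).intervalIntegrable _ _),
      intervalIntegral.integral_const_mul, integral_id, intervalIntegral.integral_const,
      intervalIntegral.integral_const]
    simp only [smul_eq_mul]
    ring
  rw [integral_eq_integral_add_integral_comp_add_half (intervalIntegrable_log_Gamma hx hxh)
      (intervalIntegrable_log_Gamma hxh (by linarith)), hdup,
    integral_add hL_two_mul (Continuous.intervalIntegrable (by fun_prop) _ _), hscale, hlinear]
  ring

/-- Raabe's formula: for every real `x ≥ 0`,
`∫_x^{x+1} ln Γ(t) dt = x·ln x − x + (1/2)·ln(2π)`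
(with `x·ln x` interpreted as `0` at `x = 0`, which is automatic since `log 0 = 0`). -/
theorem raabe_formula (x : ℝ) (hx : 0 ≤ x) :
    (∫ t in x..(x + 1), Real.log (Real.Gamma t)) =
      x * Real.log x - x + (1 / 2) * Real.log (2 * Real.pi) := by
  have hlog : log (2 * π) = log 2 + log π := log_mul two_ne_zero pi_ne_zero
  obtain ⟨C, hC⟩ := exists_integral_log_Gamma_eq_add_const
  have hC_val : C = 1 / 2 * log (2 * π) := by
    have h := integral_log_Gamma_eq_half_integral_two_mul zero_le_one
    rw [mul_one, hC 1 one_pos, hC 2 two_pos, log_one] at h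
    linarith
  rcases hx.eq_or_lt with rfl | hx
  · have h := integral_log_Gamma_eq_half_integral_two_mul le_rfl
    simp only [mul_zero, zero_add, sub_zero, log_zero] at h ⊢
    linarith
  · rw [hC x hx, hC_val]
end

section
/- Let ψ denote the derivative of ln ∘ Γ on (0, ∞) and let S(t) = (t−1)·ψ(t−1) − t + 2. Then (i) for every integer n ≥ 2, S(n) = ∑_{k=1}^{n−1} ψ(k), and (ii) for every real x > 1, ∫_x^{x+1} S(t) dt = ln Γ(x) + 1/2 − (1/2) ln(2π). -/
/-!
Differentiating `log Γ(x + 1) = log x + log Γ(x)` gives `ψ(x + 1) = ψ(x) + 1/x`, so that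
`S(n + 1) - S(n) = ψ(n)`, which is (i).

For (ii), integration by parts turns `∫_a^{a+1} s ψ(s) ds` into boundary terms minus Raabe's
integral `R(a) = ∫_a^{a+1} log Γ`; here `ψ` is integrable because it is monotone, `log Γ` being
convex. Since `R'(x) = log Γ(x + 1) - log Γ(x) = log x`, `R(x) = x log x - x + C`, and integrating
the logarithm of Legendre's duplication formula over `[1/2, 3/2]` expresses `R(1/2) + R(1)`
through `R(1) + R(2)`, which forces `C = ½ log 2π`.
-/

open Real intervalIntegral Set Filter Topology

open MeasureTheory (volume)

namespace Real

noncomputable def digamma (x : ℝ) : ℝ := deriv (fun u ↦ log (Gamma u)) x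

theorem hasDerivAt_log_Gamma {x : ℝ} (hx : 0 < x) :
    HasDerivAt (fun u ↦ log (Gamma u)) (digamma x) x :=
  ((differentiableOn_Gamma_Ioi x hx).differentiableAt (Ioi_mem_nhds hx)).log
    (Gamma_pos_of_pos hx).ne' |>.hasDerivAt

theorem continuousOn_log_Gamma : ContinuousOn (fun u ↦ log (Gamma u)) (Ioi 0) :=
  fun _ hx ↦ (hasDerivAt_log_Gamma hx).continuousAt.continuousWithinAt

theorem intervalIntegrable_log_Gamma {a b : ℝ} (ha : 0 < a) (hb : 0 < b) :
    IntervalIntegrable (fun u ↦ log (Gamma u)) volume a b :=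
  (continuousOn_log_Gamma.mono fun _ ht ↦ (lt_min ha hb).trans_le ht.1).intervalIntegrable

theorem log_Gamma_add_one {x : ℝ} (hx : 0 < x) :
    log (Gamma (x + 1)) = log x + log (Gamma x) := by
  rw [Gamma_add_one hx.ne', log_mul hx.ne' (Gamma_pos_of_pos hx).ne']

theorem digamma_add_one {x : ℝ} (hx : 0 < x) : digamma (x + 1) = digamma x + x⁻¹ := by
  have hshift : HasDerivAt (fun u ↦ log (Gamma (u + 1))) (digamma (x + 1)) x :=
    (hasDerivAt_log_Gamma (by linarith)).comp_add_const x 1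
  have hsum : HasDerivAt (fun u ↦ log u + log (Gamma u)) (x⁻¹ + digamma x) x :=
    (hasDerivAt_log hx.ne').add (hasDerivAt_log_Gamma hx)
  have heq : (fun u ↦ log (Gamma (u + 1))) =ᶠ[𝓝 x] fun u ↦ log u + log (Gamma u) :=
    eventually_of_mem (Ioi_mem_nhds hx) fun _ hu ↦ log_Gamma_add_one hu
  rw [hshift.unique (hsum.congr_of_eventuallyEq heq), add_comm]

theorem monotoneOn_digamma : MonotoneOn digamma (Ioi 0) :=
  convexOn_log_Gamma.monotoneOn_deriv fun _ hx ↦ (hasDerivAt_log_Gamma hx).differentiableAt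

theorem intervalIntegrable_digamma {a b : ℝ} (ha : 0 < a) (hb : 0 < b) :
    IntervalIntegrable digamma volume a b :=
  (monotoneOn_digamma.mono fun _ ht ↦ (lt_min ha hb).trans_le ht.1).intervalIntegrable

theorem hasDerivAt_integral_log_Gamma_unit {x : ℝ} (hx : 0 < x) :
    HasDerivAt (fun y ↦ ∫ t in y..y + 1, log (Gamma t)) (log x) x := by
  set G : ℝ → ℝ := fun y ↦ ∫ t in (1 : ℝ)..y, log (Gamma t)
  have hG : ∀ y, 0 < y → HasDerivAt G (log (Gamma y)) y := fun y hy ↦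
    integral_hasDerivAt_right (intervalIntegrable_log_Gamma one_pos hy)
      (continuousOn_log_Gamma.stronglyMeasurableAtFilter isOpen_Ioi y hy)
      (continuousOn_log_Gamma.continuousAt (Ioi_mem_nhds hy))
  have heq : (fun y ↦ G (y + 1) - G y) =ᶠ[𝓝 x] fun y ↦ ∫ t in y..y + 1, log (Gamma t) :=
    eventually_of_mem (Ioi_mem_nhds hx) fun y (hy : 0 < y) ↦
      integral_interval_sub_left (intervalIntegrable_log_Gamma one_pos (by linarith))
        (intervalIntegrable_log_Gamma one_pos hy)
  have hderiv := ((hG (x + 1) (by linarith)).comp_add_const x 1).sub (hG x hx)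
  rw [log_Gamma_add_one hx, add_sub_cancel_right] at hderiv
  exact hderiv.congr_of_eventuallyEq heq.symm

theorem exists_integral_log_Gamma_unit_eq :
    ∃ C, ∀ x, 0 < x → ∫ t in x..x + 1, log (Gamma t) = x * log x - x + C := by
  have hR : ∀ x ∈ Ioi (0 : ℝ), HasDerivAt (fun y ↦ ∫ t in y..y + 1, log (Gamma t)) (log x) x :=
    fun _ hx ↦ hasDerivAt_integral_log_Gamma_unit hx
  have hg : ∀ x ∈ Ioi (0 : ℝ), HasDerivAt (fun y ↦ y * log y - y) (log x) x := fun x hx ↦ by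
    have h := ((hasDerivAt_id' x).mul (hasDerivAt_log (ne_of_gt hx))).sub (hasDerivAt_id' x)
    rwa [one_mul, mul_inv_cancel₀ (ne_of_gt hx), add_sub_cancel_right] at h
  obtain ⟨C, hC⟩ := isOpen_Ioi.exists_eq_add_of_deriv_eq isPreconnected_Ioi
    (fun x hx ↦ (hR x hx).differentiableAt.differentiableWithinAt)
    (fun x hx ↦ (hg x hx).differentiableAt.differentiableWithinAt)
    (fun x hx ↦ by simp only [(hR x hx).deriv, (hg x hx).deriv])
  exact ⟨C, fun x hx ↦ hC hx⟩

theorem log_Gamma_add_log_Gamma_add_half {x : ℝ} (hx : 0 < x) :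
    log (Gamma x) + log (Gamma (x + 1 / 2)) =
      log (Gamma (2 * x)) + ((1 - 2 * x) * log 2 + log π / 2) := by
  rw [← log_mul (Gamma_pos_of_pos hx).ne' (Gamma_pos_of_pos (by linarith)).ne',
    Gamma_mul_Gamma_add_half, log_mul (by positivity) (by positivity),
    log_mul (Gamma_pos_of_pos (by linarith)).ne' (by positivity), log_rpow two_pos,
    log_sqrt pi_pos.le, add_assoc]

theorem integral_log_Gamma_unit_doubling {x : ℝ} (hx : 0 < x) :
    (∫ t in x..x + 1, log (Gamma t)) + ∫ t in x + 1 / 2..x + 1 / 2 + 1, log (Gamma t) =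
      ((∫ t in 2 * x..2 * x + 1, log (Gamma t)) +
        ∫ t in 2 * x + 1..2 * x + 1 + 1, log (Gamma t)) / 2 - 2 * x * log 2 + log π / 2 := by
  have hpos : ∀ t ∈ uIcc x (x + 1), 0 < t := fun t ht ↦ (lt_min hx (by linarith)).trans_le ht.1
  have hint : ∀ {g : ℝ → ℝ}, Continuous g → (∀ t, 0 < t → 0 < g t) →
      IntervalIntegrable (fun t ↦ log (Gamma (g t))) volume x (x + 1) := fun hg hgpos ↦
    (continuousOn_log_Gamma.comp hg.continuousOn fun t ht ↦ hgpos t (hpos t ht)).intervalIntegrable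
  have hshift : ∫ t in x..x + 1, log (Gamma (t + 1 / 2)) =
      ∫ t in x + 1 / 2..x + 1 / 2 + 1, log (Gamma t) := by
    rw [integral_comp_add_right (fun t ↦ log (Gamma t)), add_right_comm]
  have hdouble : ∫ t in x..x + 1, log (Gamma (2 * t)) =
      ((∫ t in 2 * x..2 * x + 1, log (Gamma t)) +
        ∫ t in 2 * x + 1..2 * x + 1 + 1, log (Gamma t)) / 2 := by
    rw [integral_comp_mul_left (fun t ↦ log (Gamma t)) two_ne_zero,
      show 2 * (x + 1) = 2 * x + 1 + 1 by ring, integral_add_adjacent_intervals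
      (intervalIntegrable_log_Gamma (by linarith) (by linarith))
      (intervalIntegrable_log_Gamma (by linarith) (by linarith)), smul_eq_mul]
    ring
  have hlin : ∫ t in x..x + 1, (1 - 2 * t) * log 2 + log π / 2 = -2 * x * log 2 + log π / 2 := by
    rw [integral_add ((by fun_prop : Continuous _).intervalIntegrable _ _) intervalIntegrable_const,
      integral_mul_const, integral_sub intervalIntegrable_const
        ((continuous_const_mul 2).intervalIntegrable _ _), integral_const_mul]
    simp only [integral_const, add_sub_cancel_left, smul_eq_mul, mul_one, integral_id,
      integral_div, one_mul]
    ring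
  rw [← hshift, ← integral_add (intervalIntegrable_log_Gamma hx (by linarith))
      (hint (continuous_add_const _) fun _ h ↦ by linarith),
    integral_congr fun t ht ↦ log_Gamma_add_log_Gamma_add_half (hpos t ht),
    integral_add (hint (continuous_const_mul 2) fun _ h ↦ by linarith)
      ((by fun_prop : Continuous _).intervalIntegrable _ _), hdouble, hlin]
  ring

theorem integral_log_Gamma_unit {x : ℝ} (hx : 0 < x) :
    ∫ t in x..x + 1, log (Gamma t) = x * log x - x + log (2 * π) / 2 := by
  obtain ⟨C, hC⟩ := exists_integral_log_Gamma_unit_eq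
  have h := integral_log_Gamma_unit_doubling (x := 1 / 2) (by norm_num)
  rw [hC _ (by norm_num), hC _ (by norm_num), hC _ (by norm_num), hC _ (by norm_num)] at h
  norm_num at h
  rw [hC x hx, log_mul two_ne_zero pi_ne_zero]
  linarith [show log (1 / 2 : ℝ) = -log 2 by rw [one_div, log_inv]]

theorem integral_mul_digamma {a : ℝ} (ha : 0 < a) :
    ∫ s in a..a + 1, s * digamma s = log (Gamma (a + 1)) + a - log (2 * π) / 2 := by
  have hpos : ∀ s ∈ uIcc a (a + 1), 0 < s := fun s hs ↦ (lt_min ha (by linarith)).trans_le hs.1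
  rw [integral_mul_deriv_eq_deriv_mul (fun s _ ↦ hasDerivAt_id' s)
      (fun s hs ↦ hasDerivAt_log_Gamma (hpos s hs)) intervalIntegrable_const
      (intervalIntegrable_digamma ha (by linarith))]
  simp only [one_mul]
  rw [integral_log_Gamma_unit ha, log_Gamma_add_one ha]
  ring

noncomputable def digammaPartialSum (t : ℝ) : ℝ := (t - 1) * digamma (t - 1) - t + 2

theorem digammaPartialSum_add_one {x : ℝ} (hx : 1 < x) :
    digammaPartialSum (x + 1) = digammaPartialSum x + digamma x := by
  have h := digamma_add_one (x := x - 1) (by linarith)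
  rw [sub_add_cancel] at h
  have hx' : x - 1 ≠ 0 := by linarith
  simp only [digammaPartialSum, add_sub_cancel_right, h]
  field_simp
  ring

theorem digammaPartialSum_natCast {n : ℕ} (hn : 2 ≤ n) :
    digammaPartialSum n = ∑ k ∈ Finset.Ico 1 n, digamma k := by
  induction n, hn using Nat.le_induction with
  | base => norm_num [digammaPartialSum]
  | succ n hn ih =>
    rw [Nat.cast_add_one, digammaPartialSum_add_one (by exact_mod_cast hn),
      Finset.sum_Ico_succ_top (by omega), ih]

theorem integral_digammaPartialSum {x : ℝ} (hx : 1 < x) :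
    ∫ t in x..x + 1, digammaPartialSum t = log (Gamma x) + 1 / 2 - log (2 * π) / 2 := by
  obtain ⟨a, ha, rfl⟩ : ∃ a, 0 < a ∧ x = a + 1 := ⟨x - 1, by linarith, by ring⟩
  have hshift : ∀ s, digammaPartialSum (s + 1) = s * digamma s + (1 - s) := fun s ↦ by
    simp only [digammaPartialSum, add_sub_cancel_right]
    ring
  have hlin : ∫ s in a..a + 1, (1 - s) = 1 / 2 - a := by
    rw [integral_sub intervalIntegrable_const intervalIntegral.intervalIntegrable_id, integral_id,
      integral_const, smul_eq_mul]
    ring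
  rw [← integral_comp_add_right, funext hshift, integral_add
      ((intervalIntegrable_digamma ha (by linarith)).continuousOn_mul continuous_id'.continuousOn)
      ((by fun_prop : Continuous _).intervalIntegrable _ _), integral_mul_digamma ha, hlin]
  ring

end Real

/-- Let `ψ` be the derivative of `ln ∘ Γ` (the digamma function) and
`S(t) = (t−1)·ψ(t−1) − t + 2`. Then `S(n) = ∑_{k=1}^{n−1} ψ(k)` for integers `n ≥ 2`,
and `∫_x^{x+1} S(t) dt = ln Γ(x) + 1/2 − (1/2)·ln(2π)` for real `x > 1`. -/
theorem digamma_partial_sums (ψ : ℝ → ℝ)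
    (hψ : ∀ t : ℝ, ψ t = deriv (fun u : ℝ => Real.log (Real.Gamma u)) t)
    (S : ℝ → ℝ) (hS : ∀ t : ℝ, S t = (t - 1) * ψ (t - 1) - t + 2) :
    (∀ n : ℕ, 2 ≤ n → S n = ∑ k ∈ Finset.Ico 1 n, ψ k) ∧
    (∀ x : ℝ, 1 < x →
      (∫ t in x..(x + 1), S t) =
        Real.log (Real.Gamma x) + 1 / 2 - (1 / 2) * Real.log (2 * Real.pi)) := by
  obtain rfl : ψ = digamma := funext hψ
  obtain rfl : S = digammaPartialSum := funext hS
  refine ⟨fun n hn ↦ digammaPartialSum_natCast hn, fun x hx ↦ ?_⟩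
  rw [integral_digammaPartialSum hx]
  ring
end

section
/- Let P(k) = k⁵/5 − k⁴/2 + k³/3 − k/30. Then (i) for every natural number n, P(n) = ∑_{j=0}^{n−1} j⁴, (ii) P'(k) = k⁴ − 2k³ + k² − 1/30, and (iii) for every real x ≥ −1/30 with 1/4 + √(x + 1/30) ≥ 0, P'( 1/2 + (1/30)·√(30·√(900x + 30) + 225) ) = x. -/
/-!
Since `P(k+1) - P(k) = k⁴` and `P(0) = 0`, `P` interpolates the partial sums. The derivative
factors as `P'(k) = (k² - k)² - 1/30`, so on `k ≥ 1/2` it is inverted by solving two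
quadratics: `k = 1/2 + √(√(x + 1/30) + 1/4)`, which is the given expression after pulling
the factors `30` out of the square roots.
-/

open Real Finset

theorem sqrt_sq_mul {c : ℝ} (hc : 0 ≤ c) (z : ℝ) : √(c ^ 2 * z) = c * √z := by
  rw [sqrt_mul (sq_nonneg c), sqrt_sq hc]

theorem sq_sub_sq_sqrt_sqrt_add {y a : ℝ} (hy : 0 ≤ y) (ha : 0 ≤ a) :
    ((√(√y + a)) ^ 2 - a) ^ 2 = y := by
  rw [sq_sqrt (by positivity), add_sub_cancel_right, sq_sqrt hy]

theorem one_thirtieth_mul_sqrt_eq {x : ℝ} (hx : -1 / 30 ≤ x) :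
    1 / 30 * √(30 * √(900 * x + 30) + 225) = √(√(x + 1 / 30) + 1 / 4) := by
  have hx' : 0 ≤ x + 1 / 30 := by linarith
  rw [show 900 * x + 30 = 30 ^ 2 * (x + 1 / 30) by ring, sqrt_sq_mul (by norm_num),
    show 30 * (30 * √(x + 1 / 30)) + 225 = 30 ^ 2 * (√(x + 1 / 30) + 1 / 4) by ring,
    sqrt_sq_mul (by norm_num)]
  ring

section FourthPowerSum

variable {P : ℝ → ℝ} (hP : ∀ k : ℝ, P k = k ^ 5 / 5 - k ^ 4 / 2 + k ^ 3 / 3 - k / 30)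
include hP

theorem eq_sum_range_pow_four (n : ℕ) : P n = ∑ j ∈ range n, (j : ℝ) ^ 4 := by
  refine (sum_range_induction _ (fun n : ℕ => P n) (by simp [hP]) n fun k _ => ?_).symm
  simp only [hP]
  push_cast
  ring

theorem deriv_eq_pow_four (k : ℝ) : deriv P k = k ^ 4 - 2 * k ^ 3 + k ^ 2 - 1 / 30 := by
  have h := ((((hasDerivAt_pow 5 k).div_const 5).sub ((hasDerivAt_pow 4 k).div_const 2)).add
    ((hasDerivAt_pow 3 k).div_const 3)).sub ((hasDerivAt_id k).div_const 30)
  rw [funext hP]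
  refine h.deriv.trans ?_
  norm_num
  ring

theorem deriv_half_add (u : ℝ) : deriv P (1 / 2 + u) = (u ^ 2 - 1 / 4) ^ 2 - 1 / 30 := by
  rw [deriv_eq_pow_four hP]
  ring

end FourthPowerSum

/-- `P(k) = k⁵/5 − k⁴/2 + k³/3 − k/30` interpolates the partial sums of `∑ j⁴`, its
derivative is `k⁴ − 2k³ + k² − 1/30`, and for `x ≥ −1/30` with
`1/4 + √(x + 1/30) ≥ 0`, the derivative evaluated at
`1/2 + (1/30)·√(30·√(900x + 30) + 225)` gives back `x`. -/
theorem fourth_powers_numerosity (P : ℝ → ℝ)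
    (hP : ∀ k : ℝ, P k = k ^ 5 / 5 - k ^ 4 / 2 + k ^ 3 / 3 - k / 30) :
    (∀ n : ℕ, P n = ∑ j ∈ Finset.range n, (j : ℝ) ^ 4) ∧
    (∀ k : ℝ, deriv P k = k ^ 4 - 2 * k ^ 3 + k ^ 2 - 1 / 30) ∧
    (∀ x : ℝ, -1 / 30 ≤ x → 0 ≤ 1 / 4 + Real.sqrt (x + 1 / 30) →
      deriv P (1 / 2 + (1 / 30) * Real.sqrt (30 * Real.sqrt (900 * x + 30) + 225)) = x) := by
  refine ⟨eq_sum_range_pow_four hP, deriv_eq_pow_four hP, fun x hx _ => ?_⟩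
  rw [one_thirtieth_mul_sqrt_eq hx, deriv_half_add hP,
    sq_sub_sq_sqrt_sqrt_add (by linarith) (by norm_num)]
  ring
end
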